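/- arXiv:math/0702401 — 3 statements merged into one kernel-verified Lean document; each statement's English description precedes it below -/
import Mathlib

section
/- For every integer n ≥ 2 and every τ in the complex upper half-plane ℍ, the functions x_n satisfy the recursion x_{n-1}(τ)² · x_n(τ) = x_n(τ)² + 4 (the squared form of x_{n-1} = √((x_n²+4)/x_n)). -/
open Complex Filter Topology

/-- Jacobi theta function θ₂(τ) = ∑_{n∈ℤ} exp(πiτ(n+1/2)²). -/
noncomputable def θ₂ (τ : ℂ) : ℂ :=
  ∑' n : ℤ, Complex.exp (Real.pi * Complex.I * τ * ((n : ℂ) + 1/2)^2)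

/-- Jacobi theta function θ₃(τ) = ∑_{n∈ℤ} exp(πiτn²). -/
noncomputable def θ₃ (τ : ℂ) : ℂ :=
  ∑' n : ℤ, Complex.exp (Real.pi * Complex.I * τ * (n : ℂ)^2)

/-- x_n(τ) = 2θ₃(2^{n-1}τ)/θ₂(2^{n-1}τ). -/
noncomputable def xfun (n : ℕ) (τ : ℂ) : ℂ :=
  2 * θ₃ (2^(n-1) * τ) / θ₂ (2^(n-1) * τ)

/-- y_n(τ) = θ₂(8τ)/θ₂(2^{n-1}τ). -/
noncomputable def yfun (n : ℕ) (τ : ℂ) : ℂ :=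
  θ₂ (8 * τ) / θ₂ (2^(n-1) * τ)


/-!
Write `Θ_a(z, τ) = thetaChar a z τ = ∑ₙ exp(πiτ(n+a)² + 2πi(n+a)z)`, so that `θ₃ = thetaChar 0 0`,
`θ₂ = thetaChar (1/2) 0` and `jacobiTheta₂ (1/2) = thetaChar 0 (1/2)` is `θ₄`. Splitting the pairs
`(m, n)` of the Cauchy product of two such series by the parity of `m + n` gives
`Θ_a(z,τ) Θ_b(w,τ) = Θ_{(a+b)/2}(z+w,2τ) Θ_{(a-b)/2}(z-w,2τ)
  + Θ_{(a+b+1)/2}(z+w,2τ) Θ_{(a-b+1)/2}(z-w,2τ)`.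
For `a = b = 0` and `a = b = 1/2` (with `z = w = 0`) this is `θ₃(τ)² = θ₃(2τ)² + θ₂(2τ)²` and
`θ₂(τ)² = 2 θ₂(2τ) θ₃(2τ)`, and the recursion is a rational identity in these four values once
`θ₂` has no zeros. The functional equation turns `θ₂(τ)` into `θ₄(-1/τ)` times a unit, and `θ₄` has
no zeros: as `Θ_{1/2}(1/2, ·) = 0`, the case `a = b = z = 0, w = 1/2` reads
`θ₃(τ) θ₄(τ) = θ₄(2τ)²`, so a zero of `θ₄` would give
zeros of arbitrarily large imaginary part, where `θ₄(τ) = θ₃(τ + 1)` is close to `1`.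
-/

open Real

def sumDiffEquiv : (ℤ × ℤ) ⊕ (ℤ × ℤ) ≃ ℤ × ℤ where
  toFun := Sum.elim (fun p => (p.1 + p.2, p.1 - p.2)) (fun p => (p.1 + p.2 + 1, p.1 - p.2))
  invFun p :=
    if (p.1 + p.2) % 2 = 0 then .inl ((p.1 + p.2) / 2, (p.1 - p.2) / 2)
    else .inr ((p.1 + p.2 - 1) / 2, (p.1 - p.2 - 1) / 2)
  left_inv := by
    rintro (⟨j, k⟩ | ⟨j, k⟩)
    · dsimp only [Sum.elim_inl]
      rw [if_pos (by omega)]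
      congr <;> omega
    · dsimp only [Sum.elim_inr]
      rw [if_neg (by omega)]
      congr <;> omega
  right_inv := by
    rintro ⟨m, n⟩
    by_cases h : (m + n) % 2 = 0
    · simp only [if_pos h, Sum.elim_inl]
      congr <;> omega
    · simp only [if_neg h, Sum.elim_inr]
      congr <;> omega

theorem HasSum.of_sumDiff {M : Type*} [AddCommMonoid M] [TopologicalSpace M] [ContinuousAdd M]
    {F : ℤ × ℤ → M} {a b : M} (ha : HasSum (fun p : ℤ × ℤ => F (p.1 + p.2, p.1 - p.2)) a)
    (hb : HasSum (fun p : ℤ × ℤ => F (p.1 + p.2 + 1, p.1 - p.2)) b) : HasSum F (a + b) :=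
  sumDiffEquiv.hasSum_iff.mp (ha.sum hb)

noncomputable section

def thetaCharTerm (a z τ : ℂ) (n : ℤ) : ℂ :=
  cexp (π * I * τ * (n + a) ^ 2 + 2 * π * I * (n + a) * z)

def thetaChar (a z τ : ℂ) : ℂ := ∑' n : ℤ, thetaCharTerm a z τ n

end

lemma thetaCharTerm_eq (a z τ : ℂ) (n : ℤ) :
    thetaCharTerm a z τ n =
      cexp (π * I * τ * a ^ 2 + 2 * π * I * a * z) * jacobiTheta₂_term n (z + a * τ) τ := by
  rw [thetaCharTerm, jacobiTheta₂_term, ← Complex.exp_add]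
  congr 1
  ring

lemma thetaChar_eq (a z τ : ℂ) :
    thetaChar a z τ =
      cexp (π * I * τ * a ^ 2 + 2 * π * I * a * z) * jacobiTheta₂ (z + a * τ) τ := by
  simp_rw [thetaChar, thetaCharTerm_eq, tsum_mul_left, jacobiTheta₂]

lemma thetaChar_zero_left (z τ : ℂ) : thetaChar 0 z τ = jacobiTheta₂ z τ := by
  simp [thetaChar_eq]

lemma summable_thetaCharTerm (a z : ℂ) {τ : ℂ} (hτ : 0 < τ.im) :
    Summable (thetaCharTerm a z τ) := by
  simp_rw [funext (thetaCharTerm_eq a z τ)]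
  exact ((summable_jacobiTheta₂_term_iff _ τ).mpr hτ).mul_left _

lemma thetaChar_add_one_left (a z τ : ℂ) : thetaChar (a + 1) z τ = thetaChar a z τ := by
  rw [thetaChar, thetaChar, ← (Equiv.addRight (1 : ℤ)).tsum_eq (thetaCharTerm a z τ)]
  refine tsum_congr fun n => ?_
  simp only [thetaCharTerm, Equiv.coe_addRight]
  push_cast
  congr 1
  ring

lemma thetaChar_neg (a z τ : ℂ) : thetaChar (-a) (-z) τ = thetaChar a z τ := by
  rw [thetaChar, thetaChar, ← (Equiv.neg ℤ).tsum_eq (thetaCharTerm a z τ)]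
  refine tsum_congr fun n => ?_
  simp only [thetaCharTerm, Equiv.neg_apply]
  push_cast
  congr 1
  ring

lemma thetaChar_add_one_right (a z τ : ℂ) :
    thetaChar a (z + 1) τ = cexp (2 * π * I * a) * thetaChar a z τ := by
  rw [thetaChar, thetaChar, ← tsum_mul_left]
  refine tsum_congr fun n => ?_
  rw [thetaCharTerm, thetaCharTerm, ← Complex.exp_add, Complex.exp_eq_exp_iff_exists_int]
  exact ⟨n, by ring⟩

lemma thetaChar_one_half_one_half (τ : ℂ) : thetaChar (1 / 2) (1 / 2) τ = 0 := by
  have hshift := thetaChar_add_one_right (1 / 2) (-(1 / 2)) τ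
  rw [show -(1 / 2) + 1 = (1 / 2 : ℂ) by norm_num, show 2 * π * I * (1 / 2) = π * I by ring,
    Complex.exp_pi_mul_I] at hshift
  have hsymm : thetaChar (1 / 2) (-(1 / 2)) τ = thetaChar (1 / 2) (1 / 2) τ :=
    calc thetaChar (1 / 2) (-(1 / 2)) τ = thetaChar (-(-(1 / 2))) (-(1 / 2)) τ := by rw [neg_neg]
      _ = thetaChar (-(1 / 2) + 1) (1 / 2) τ := by rw [thetaChar_neg, thetaChar_add_one_left]
      _ = thetaChar (1 / 2) (1 / 2) τ := by norm_num
  linear_combination (hshift - hsymm) / 2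

lemma hasSum_thetaCharTerm_mul (a z b w : ℂ) {τ : ℂ} (hτ : 0 < τ.im) :
    HasSum (fun p : ℤ × ℤ => thetaCharTerm a z τ p.1 * thetaCharTerm b w τ p.2)
      (thetaChar a z τ * thetaChar b w τ) :=
  (summable_thetaCharTerm a z hτ).hasSum.mul (summable_thetaCharTerm b w hτ).hasSum <|
    summable_mul_of_summable_norm (summable_norm_iff.mpr (summable_thetaCharTerm a z hτ))
      (summable_norm_iff.mpr (summable_thetaCharTerm b w hτ))

theorem thetaChar_mul_thetaChar (a b z w : ℂ) {τ : ℂ} (hτ : 0 < τ.im) :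
    thetaChar a z τ * thetaChar b w τ =
      thetaChar ((a + b) / 2) (z + w) (2 * τ) * thetaChar ((a - b) / 2) (z - w) (2 * τ) +
      thetaChar ((a + b + 1) / 2) (z + w) (2 * τ) * thetaChar ((a - b + 1) / 2) (z - w) (2 * τ) := by
  have h2τ : 0 < (2 * τ).im := by simpa using hτ
  refine (hasSum_thetaCharTerm_mul a z b w hτ).unique (HasSum.of_sumDiff ?_ ?_) <;>
  · convert hasSum_thetaCharTerm_mul _ _ _ _ h2τ using 2 with p
    simp only [thetaCharTerm, ← Complex.exp_add]
    push_cast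
    congr 1
    ring

lemma θ₃_eq_thetaChar (τ : ℂ) : θ₃ τ = thetaChar 0 0 τ := by
  simp [θ₃, thetaChar, thetaCharTerm]

lemma θ₂_eq_thetaChar (τ : ℂ) : θ₂ τ = thetaChar (1 / 2) 0 τ := by
  simp [θ₂, thetaChar, thetaCharTerm]

lemma θ₃_sq {τ : ℂ} (hτ : 0 < τ.im) : θ₃ τ ^ 2 = θ₃ (2 * τ) ^ 2 + θ₂ (2 * τ) ^ 2 := by
  simpa [θ₃_eq_thetaChar, θ₂_eq_thetaChar, sq] using thetaChar_mul_thetaChar 0 0 0 0 hτ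

lemma θ₂_sq {τ : ℂ} (hτ : 0 < τ.im) : θ₂ τ ^ 2 = 2 * θ₂ (2 * τ) * θ₃ (2 * τ) := by
  have h := thetaChar_mul_thetaChar (1 / 2) (1 / 2) 0 0 hτ
  norm_num at h
  rw [θ₃_eq_thetaChar, θ₂_eq_thetaChar, θ₂_eq_thetaChar, sq, h, ← zero_add 1,
    thetaChar_add_one_left]
  ring

lemma jacobiTheta₂_one_half (τ : ℂ) : jacobiTheta₂ (1 / 2) τ = jacobiTheta (τ + 1) := by
  rw [jacobiTheta_eq_jacobiTheta₂, jacobiTheta₂, jacobiTheta₂]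
  refine tsum_congr fun n => ?_
  obtain ⟨k, hk⟩ := Int.even_mul_pred_self n
  have hk' : (n : ℂ) * (n - 1) = k + k := by exact_mod_cast hk
  rw [jacobiTheta₂_term, jacobiTheta₂_term, Complex.exp_eq_exp_iff_exists_int]
  exact ⟨-k, by push_cast; linear_combination -(π * I) * hk'⟩

lemma jacobiTheta₂_one_half_two_mul_sq {τ : ℂ} (hτ : 0 < τ.im) :
    jacobiTheta₂ (1 / 2) (2 * τ) ^ 2 = jacobiTheta τ * jacobiTheta₂ (1 / 2) τ := by
  have h := thetaChar_mul_thetaChar 0 0 0 (1 / 2) hτ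
  norm_num [thetaChar_one_half_one_half, thetaChar_zero_left] at h
  rw [jacobiTheta_eq_jacobiTheta₂, h, sq]

lemma jacobiTheta_ne_zero_of_one_le_im {τ : ℂ} (hτ : 1 ≤ τ.im) : jacobiTheta τ ≠ 0 := by
  have hbound := norm_jacobiTheta_sub_one_le (τ := τ) (by linarith)
  set r := rexp (-π * τ.im)
  have hr : r * rexp (π * τ.im) = 1 := by rw [← Real.exp_add]; simp
  have hexp : 4 < rexp (π * τ.im) := by
    nlinarith [Real.add_one_le_exp (π * τ.im), Real.pi_gt_three]
  have hr3 : r * 3 < 1 := by nlinarith [Real.exp_pos (-π * τ.im)]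
  intro h0
  rw [h0, zero_sub, norm_neg, norm_one, div_mul_eq_mul_div, le_div_iff₀ (by linarith)] at hbound
  linarith

lemma jacobiTheta₂_one_half_ne_zero {τ : ℂ} (hτ : 0 < τ.im) : jacobiTheta₂ (1 / 2) τ ≠ 0 := by
  obtain ⟨k, hk⟩ := pow_unbounded_of_one_lt (1 / τ.im) one_lt_two
  rw [div_lt_iff₀ hτ] at hk
  induction k generalizing τ with
  | zero =>
    rw [jacobiTheta₂_one_half]
    exact jacobiTheta_ne_zero_of_one_le_im (by simp at hk ⊢; linarith)
  | succ k ih =>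
    have h2τ : (2 * τ).im = 2 * τ.im := by simp
    have hne := ih (τ := 2 * τ) (by linarith) (by rwa [h2τ, ← mul_assoc, ← pow_succ])
    intro h0
    have hsq := jacobiTheta₂_one_half_two_mul_sq hτ
    rw [h0, mul_zero] at hsq
    exact hne (pow_eq_zero_iff two_ne_zero |>.mp hsq)

lemma θ₂_ne_zero {τ : ℂ} (hτ : 0 < τ.im) : θ₂ τ ≠ 0 := by
  have hτ0 : τ ≠ 0 := fun h => by simp [h] at hτ
  have hinv : 0 < (-1 / τ).im := by
    simpa [neg_div, inv_neg] using UpperHalfPlane.im_inv_neg_coe_pos ⟨τ, hτ⟩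
  rw [θ₂_eq_thetaChar, thetaChar_eq, jacobiTheta₂_functional_equation, zero_add,
    mul_div_cancel_right₀ _ hτ0]
  refine mul_ne_zero (Complex.exp_ne_zero _)
    (mul_ne_zero (mul_ne_zero ?_ (Complex.exp_ne_zero _)) (jacobiTheta₂_one_half_ne_zero hinv))
  simp [hτ0]

lemma xfun_succ (n : ℕ) (τ : ℂ) : xfun (n + 1) τ = xfun 1 (2 ^ n * τ) := by
  simp [xfun]

lemma xfun_one_sq_mul {σ : ℂ} (hσ : 0 < σ.im) :
    xfun 1 σ ^ 2 * xfun 1 (2 * σ) = xfun 1 (2 * σ) ^ 2 + 4 := by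
  have h2σ : 0 < (2 * σ).im := by simpa using hσ
  have hθ₃ := θ₃_sq hσ
  have hθ₂ := θ₂_sq hσ
  have hθ₂σ := θ₂_ne_zero hσ
  have hθ₂2σ := θ₂_ne_zero h2σ
  simp only [xfun, Nat.sub_self, pow_zero, one_mul]
  field_simp
  linear_combination (8 * θ₃ (2 * σ) * θ₂ (2 * σ)) * hθ₃ -
    (4 * θ₃ (2 * σ) ^ 2 + 4 * θ₂ (2 * σ) ^ 2) * hθ₂

theorem x_recursion (n : ℕ) (hn : 2 ≤ n) (τ : ℂ) (hτ : 0 < τ.im) :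
    xfun (n - 1) τ ^ 2 * xfun n τ = xfun n τ ^ 2 + 4 := by
  obtain ⟨m, rfl⟩ := Nat.exists_eq_add_of_le' hn
  have hσ : 0 < ((2 : ℂ) ^ m * τ).im := by
    rw [show (2 : ℂ) ^ m = ((2 ^ m : ℝ) : ℂ) by push_cast; rfl, Complex.im_ofReal_mul]
    positivity
  change xfun (m + 1) τ ^ 2 * xfun (m + 1 + 1) τ = xfun (m + 1 + 1) τ ^ 2 + 4
  rw [xfun_succ (m + 1), xfun_succ m, pow_succ' (2 : ℂ) m, mul_assoc]
  exact xfun_one_sq_mul hσ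
end

section
/- For every τ in the complex upper half-plane ℍ, with x = x₈(τ) = 2θ₃(128τ)/θ₂(128τ) and y = y₈(τ) = θ₂(8τ)/θ₂(128τ), one has y¹⁶ − 16·x·(x+2)⁴·(x²+4)·y⁸ − x·(x+2)⁴·(x−2)⁸·(x²+4) = 0 (a defining equation of X₀(256)). -/
set_option maxHeartbeats 2000000


open Complex Filter Topology

lemma summable_t2 {t : ℂ} (ht : 0 < t.im) :
    Summable fun n : ℤ => cexp (Real.pi * Complex.I * t * ((n : ℂ) + 1/2)^2) := by
  have h := ((summable_jacobiTheta₂_term_iff (t/2) t).mpr ht).mul_left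
    (cexp (Real.pi * Complex.I * t / 4))
  refine h.congr fun n => ?_
  rw [jacobiTheta₂_term, ← Complex.exp_add]
  congr 1
  ring

lemma summable_t3 {t : ℂ} (ht : 0 < t.im) :
    Summable fun n : ℤ => cexp (Real.pi * Complex.I * t * (n : ℂ)^2) := by
  refine ((summable_jacobiTheta₂_term_iff 0 t).mpr ht).congr fun n => ?_
  rw [jacobiTheta₂_term]
  congr 1
  ring

lemma hasSum_mul_theta {f g : ℤ → ℂ} (hf : Summable f) (hg : Summable g) :
    HasSum (fun p : ℤ × ℤ => f p.1 * g p.2) ((∑' n, f n) * ∑' n, g n) := by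
  have hfn : Summable fun n => ‖f n‖ := summable_norm_iff.mpr hf
  have hgn : Summable fun n => ‖g n‖ := summable_norm_iff.mpr hg
  rw [tsum_mul_tsum_of_summable_norm hfn hgn]
  exact (summable_mul_of_summable_norm hfn hgn).hasSum

lemma hasSum_compl_inj {β γ γ' : Type*} {f : β → ℂ} {g₁ : γ → β} {g₂ : γ' → β} {a b : ℂ}
    (h1 : Function.Injective g₁) (h2 : Function.Injective g₂)
    (hc : IsCompl (Set.range g₁) (Set.range g₂))
    (hs1 : HasSum (f ∘ g₁) a) (hs2 : HasSum (f ∘ g₂) b) : HasSum f (a + b) :=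
  (h1.hasSum_range_iff.mpr hs1).add_isCompl hc (h2.hasSum_range_iff.mpr hs2)

lemma theta2_sq {t : ℂ} (ht : 0 < t.im) : θ₂ t ^ 2 = 2 * θ₂ (2*t) * θ₃ (2*t) := by
  have ht2 : 0 < ((2:ℂ)*t).im := by simpa using ht
  have key : HasSum (fun p : ℤ × ℤ =>
      cexp (Real.pi * Complex.I * t * ((p.1 : ℂ) + 1/2)^2) *
      cexp (Real.pi * Complex.I * t * ((p.2 : ℂ) + 1/2)^2))
      (θ₂ (2*t) * θ₃ (2*t) + θ₃ (2*t) * θ₂ (2*t)) := by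
    apply hasSum_compl_inj (g₁ := fun p : ℤ × ℤ => (p.1 + p.2, p.1 - p.2))
        (g₂ := fun p : ℤ × ℤ => (p.1 + p.2, p.1 - p.2 - 1))
    · intro p q h
      simp only [Prod.mk.injEq] at h
      ext <;> omega
    · intro p q h
      simp only [Prod.mk.injEq] at h
      ext <;> omega
    · constructor
      · rw [disjoint_iff_inf_le]
        rintro ⟨m, n⟩ ⟨⟨⟨j, k⟩, h1⟩, ⟨⟨j', k'⟩, h2⟩⟩
        simp only [Prod.mk.injEq] at h1 h2
        omega
      · rw [codisjoint_iff_le_sup]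
        rintro ⟨m, n⟩ -
        rcases Int.even_or_odd (m + n) with ⟨r, hr⟩ | ⟨r, hr⟩
        · exact Or.inl ⟨(r, m - r), by simp only [Prod.mk.injEq]; omega⟩
        · exact Or.inr ⟨(r + 1, m - r - 1), by simp only [Prod.mk.injEq]; omega⟩
    · rw [θ₂, θ₃]
      refine (hasSum_mul_theta (summable_t2 ht2) (summable_t3 ht2)).congr_fun fun p => ?_
      simp only [Function.comp]
      rw [← Complex.exp_add, ← Complex.exp_add]
      congr 1
      push_cast
      ring
    · rw [θ₂, θ₃]
      refine (hasSum_mul_theta (summable_t3 ht2) (summable_t2 ht2)).congr_fun fun p => ?_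
      simp only [Function.comp]
      rw [← Complex.exp_add, ← Complex.exp_add]
      congr 1
      push_cast
      ring
  have h2 : θ₂ t ^ 2 = ∑' p : ℤ × ℤ,
      cexp (Real.pi * Complex.I * t * ((p.1 : ℂ) + 1/2)^2) *
      cexp (Real.pi * Complex.I * t * ((p.2 : ℂ) + 1/2)^2) := by
    rw [sq, θ₂, tsum_mul_tsum_of_summable_norm
      (summable_norm_iff.mpr (summable_t2 ht)) (summable_norm_iff.mpr (summable_t2 ht))]
  rw [h2, key.tsum_eq]
  ring

lemma theta3_sq {t : ℂ} (ht : 0 < t.im) : θ₃ t ^ 2 = θ₃ (2*t) ^ 2 + θ₂ (2*t) ^ 2 := by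
  have ht2 : 0 < ((2:ℂ)*t).im := by simpa using ht
  have hasSum_mul_theta : ∀ {f g : ℤ → ℂ}, Summable f → Summable g →
      HasSum (fun p : ℤ × ℤ => f p.1 * g p.2) ((∑' n, f n) * ∑' n, g n) := by
    intro f g hf hg
    have hfn : Summable fun n => ‖f n‖ := summable_norm_iff.mpr hf
    have hgn : Summable fun n => ‖g n‖ := summable_norm_iff.mpr hg
    rw [tsum_mul_tsum_of_summable_norm hfn hgn]
    exact (summable_mul_of_summable_norm hfn hgn).hasSum
  have key : HasSum (fun p : ℤ × ℤ =>
      cexp (Real.pi * Complex.I * t * (p.1 : ℂ)^2) *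
      cexp (Real.pi * Complex.I * t * (p.2 : ℂ)^2))
      (θ₃ (2*t) * θ₃ (2*t) + θ₂ (2*t) * θ₂ (2*t)) := by
    apply hasSum_compl_inj (g₁ := fun p : ℤ × ℤ => (p.1 + p.2, p.1 - p.2))
        (g₂ := fun p : ℤ × ℤ => (p.1 + p.2 + 1, p.1 - p.2))
    · intro p q h
      simp only [Prod.mk.injEq] at h
      ext <;> omega
    · intro p q h
      simp only [Prod.mk.injEq] at h
      ext <;> omega
    · constructor
      · rw [disjoint_iff_inf_le]
        rintro ⟨m, n⟩ ⟨⟨⟨j, k⟩, h1⟩, ⟨⟨j', k'⟩, h2⟩⟩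
        simp only [Prod.mk.injEq] at h1 h2
        omega
      · rw [codisjoint_iff_le_sup]
        rintro ⟨m, n⟩ -
        rcases Int.even_or_odd (m + n) with ⟨r, hr⟩ | ⟨r, hr⟩
        · exact Or.inl ⟨(r, m - r), by simp only [Prod.mk.injEq]; omega⟩
        · exact Or.inr ⟨(r, m - r - 1), by simp only [Prod.mk.injEq]; omega⟩
    · rw [θ₃]
      refine (hasSum_mul_theta (summable_t3 ht2) (summable_t3 ht2)).congr_fun fun p => ?_
      simp only [Function.comp]
      rw [← Complex.exp_add, ← Complex.exp_add]
      congr 1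
      push_cast
      ring
    · rw [θ₂]
      refine (hasSum_mul_theta (summable_t2 ht2) (summable_t2 ht2)).congr_fun fun p => ?_
      simp only [Function.comp]
      rw [← Complex.exp_add, ← Complex.exp_add]
      congr 1
      push_cast
      ring
  have h2 : θ₃ t ^ 2 = ∑' p : ℤ × ℤ,
      cexp (Real.pi * Complex.I * t * ((p.1 : ℂ))^2) *
      cexp (Real.pi * Complex.I * t * ((p.2 : ℂ))^2) := by
    rw [sq, θ₃, tsum_mul_tsum_of_summable_norm
      (summable_norm_iff.mpr (summable_t3 ht)) (summable_norm_iff.mpr (summable_t3 ht))]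
  rw [h2, key.tsum_eq]
  ring

lemma theta3_split {t : ℂ} (ht : 0 < t.im) : θ₃ t = θ₃ (4*t) + θ₂ (4*t) := by
  have ht4 : 0 < ((4:ℂ)*t).im := by simpa using ht
  have key : HasSum (fun n : ℤ => cexp (Real.pi * Complex.I * t * (n : ℂ)^2))
      (θ₃ (4*t) + θ₂ (4*t)) := by
    apply hasSum_compl_inj (g₁ := fun j : ℤ => 2*j) (g₂ := fun j : ℤ => 2*j + 1)
    · intro a b h; dsimp only at h; omega
    · intro a b h; dsimp only at h; omega
    · constructor
      · rw [disjoint_iff_inf_le]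
        rintro m ⟨⟨j, h1⟩, ⟨k, h2⟩⟩
        dsimp only at h1 h2
        omega
      · rw [codisjoint_iff_le_sup]
        rintro m -
        rcases Int.even_or_odd m with ⟨r, hr⟩ | ⟨r, hr⟩
        · exact Or.inl ⟨r, by dsimp only; omega⟩
        · exact Or.inr ⟨r, by dsimp only; omega⟩
    · rw [θ₃]
      refine ((summable_t3 ht4).hasSum).congr_fun fun j => ?_
      simp only [Function.comp]
      congr 1
      push_cast
      ring
    · rw [θ₂]
      refine ((summable_t2 ht4).hasSum).congr_fun fun j => ?_
      simp only [Function.comp]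
      congr 1
      push_cast
      ring
  rw [θ₃]
  exact key.tsum_eq

theorem X0_256_equation (τ : ℂ) (hτ : 0 < τ.im)
    (x y : ℂ) (hx : x = xfun 8 τ) (hy : y = yfun 8 τ) :
    y ^ 16 - 16 * x * (x + 2) ^ 4 * (x ^ 2 + 4) * y ^ 8
      - x * (x + 2) ^ 4 * (x - 2) ^ 8 * (x ^ 2 + 4) = 0 := by
  have h8 : (0:ℝ) < ((8:ℂ)*τ).im := by simpa using hτ
  have h16 : (0:ℝ) < ((16:ℂ)*τ).im := by simpa using hτ
  have h32 : (0:ℝ) < ((32:ℂ)*τ).im := by simpa using hτ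
  have h64 : (0:ℝ) < ((64:ℂ)*τ).im := by simpa using hτ
  have e1 : θ₂ (8*τ)^2 = 2 * θ₂ (16*τ) * θ₃ (16*τ) := by
    have h := theta2_sq h8; rwa [show (2:ℂ)*(8*τ) = 16*τ from by ring] at h
  have e2 : θ₂ (16*τ)^2 = 2 * θ₂ (32*τ) * θ₃ (32*τ) := by
    have h := theta2_sq h16; rwa [show (2:ℂ)*(16*τ) = 32*τ from by ring] at h
  have e4 : θ₂ (32*τ)^2 = 2 * θ₂ (64*τ) * θ₃ (64*τ) := by
    have h := theta2_sq h32; rwa [show (2:ℂ)*(32*τ) = 64*τ from by ring] at h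
  have e6 : θ₂ (64*τ)^2 = 2 * θ₂ (128*τ) * θ₃ (128*τ) := by
    have h := theta2_sq h64; rwa [show (2:ℂ)*(64*τ) = 128*τ from by ring] at h
  have e3 : θ₃ (16*τ) = θ₃ (64*τ) + θ₂ (64*τ) := by
    have h := theta3_split h16; rwa [show (4:ℂ)*(16*τ) = 64*τ from by ring] at h
  have e5 : θ₃ (32*τ) = θ₃ (128*τ) + θ₂ (128*τ) := by
    have h := theta3_split h32; rwa [show (4:ℂ)*(32*τ) = 128*τ from by ring] at h
  have e7 : θ₃ (64*τ)^2 = θ₃ (128*τ)^2 + θ₂ (128*τ)^2 := by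
    have h := theta3_sq h64; rwa [show (2:ℂ)*(64*τ) = 128*τ from by ring] at h
  have hx' : x = 2 * θ₃ (128*τ) / θ₂ (128*τ) := by
    rw [hx, xfun]; norm_num
  have hy' : y = θ₂ (8*τ) / θ₂ (128*τ) := by
    rw [hy, yfun]; norm_num
  clear hx hy
  set A := θ₂ (8*τ) with hA
  set B1 := θ₂ (16*τ) with hB1
  set C1 := θ₃ (16*τ) with hC1
  set B2 := θ₂ (32*τ) with hB2
  set C2 := θ₃ (32*τ) with hC2
  set B3 := θ₂ (64*τ) with hB3
  set C3 := θ₃ (64*τ) with hC3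
  set B := θ₂ (128*τ) with hB
  set C := θ₃ (128*τ) with hC
  have hA8 : A^8 = 128*(B3*C3)*((B+C)^2)*((B+C)^2 + 2*(B3*C3))^2 := by
    calc A^8 = (A^2)^4 := by ring
      _ = (2*B1*C1)^4 := by rw [e1]
      _ = (B1^2)^2 * (16*C1^4) := by ring
      _ = (2*B2*C2)^2 * (16*C1^4) := by rw [e2]
      _ = B2^2 * (64*C2^2*C1^4) := by ring
      _ = (2*B3*C3) * (64*C2^2*C1^4) := by rw [e4]
      _ = (2*B3*C3) * (64*(C+B)^2*(C3+B3)^4) := by rw [e3, e5]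
      _ = 128*(B3*C3)*((B+C)^2)*((C3^2 + B3^2) + 2*(B3*C3))^2 := by ring
      _ = 128*(B3*C3)*((B+C)^2)*(((C^2+B^2) + (2*B*C)) + 2*(B3*C3))^2 := by rw [e6, e7]
      _ = 128*(B3*C3)*((B+C)^2)*((B+C)^2 + 2*(B3*C3))^2 := by ring
  have hD : (B3*C3)^2 = 2*B*C*(C^2+B^2) := by
    linear_combination C3^2 * e6 + (2*B*C) * e7
  have key : A^16 - 2048*C*(C+B)^4*(C^2+B^2)*A^8*B
      - 32768*C*(C+B)^4*(C-B)^8*(C^2+B^2)*B = 0 := by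
    linear_combination (A^8 + 128*(B3*C3)*((B+C)^2)*((B+C)^2 + 2*(B3*C3))^2
      - 2048*C*(C+B)^4*(C^2+B^2)*B) * hA8 + (262144 * C^4 * (B3*C3)^4 + 524288 * C^6 * (B3*C3)^3 + 393216 * C^8 * (B3*C3)^2 + 131072 * C^10 * (B3*C3) + 16384 * C^12 + 1048576 * B * C^3 * (B3*C3)^4 + 3145728 * B * C^5 * (B3*C3)^3 + 3670016 * B * C^7 * (B3*C3)^2 + 1310720 * B * C^9 * (B3*C3) - 65536 * B * C^11 + 1572864 * B^2 * C^2 * (B3*C3)^4 + 7864320 * B^2 * C^4 * (B3*C3)^3 + 13107200 * B^2 * C^6 * (B3*C3)^2 + 5898240 * B^2 * C^8 * (B3*C3) + 32768 * B^2 * C^10 + 1048576 * B^3 * C * (B3*C3)^4 + 10485760 * B^3 * C^3 * (B3*C3)^3 + 25690112 * B^3 * C^5 * (B3*C3)^2 + 15728640 * B^3 * C^7 * (B3*C3) + 196608 * B^3 * C^9 + 262144 * B^4 * (B3*C3)^4 + 7864320 * B^4 * C^2 * (B3*C3)^3 + 31719424 * B^4 * C^4 * (B3*C3)^2 + 27525120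 * B^4 * C^6 * (B3*C3) - 278528 * B^4 * C^8 + 3145728 * B^5 * C * (B3*C3)^3 + 25690112 * B^5 * C^3 * (B3*C3)^2 + 33030144 * B^5 * C^5 * (B3*C3) - 131072 * B^5 * C^7 + 524288 * B^6 * (B3*C3)^3 + 13107200 * B^6 * C^2 * (B3*C3)^2 + 27525120 * B^6 * C^4 * (B3*C3) + 458752 * B^6 * C^6 + 3670016 * B^7 * C * (B3*C3)^2 + 15728640 * B^7 * C^3 * (B3*C3) - 131072 * B^7 * C^5 + 393216 * B^8 * (B3*C3)^2 + 5898240 * B^8 * C^2 * (B3*C3) - 278528 * B^8 * C^4 + 1310720 * B^9 * C * (B3*C3) + 196608 * B^9 * C^3 + 131072 * B^10 * (B3*C3) + 32768 * B^10 * C^2 - 65536 * B^11 * C + 16384 * B^12) * hD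
  by_cases hBz : B = 0
  · rw [hx', hy', hBz]
    norm_num
  · have hyB : y * B = A := by rw [hy']; field_simp
    have hxB : x * B = 2 * C := by rw [hx']; field_simp
    have main : B^16 * (y ^ 16 - 16 * x * (x + 2) ^ 4 * (x ^ 2 + 4) * y ^ 8
        - x * (x + 2) ^ 4 * (x - 2) ^ 8 * (x ^ 2 + 4)) = 0 := by
      linear_combination key + (A^15 + y * A^14 * B + y^2 * A^13 * B^2 + y^3 * A^12 * B^3 + y^4 * A^11 * B^4 + y^5 * A^10 * B^5 + y^6 * A^9 * B^6 + y^7 * A^8 * B^7 + y^8 * A^7 * B^8 + y^9 * A^6 * B^9 + y^10 * A^5 * B^10 + y^11 * A^4 * B^11 + y^12 * A^3 * B^12 + y^13 * A^2 * B^13 + y^14 * A * B^14 + y^15 * B^15 - 1024 * x * A^7 * B^8 - 1024 * x * y * A^6 * B^9 - 1024 * x * y^2 * A^5 * B^10 - 1024 * x * y^3 * A^4 * B^11 - 1024 * x * y^4 * A^3 * B^12 - 1024 * x * y^5 * A^2 * B^13 - 1024 * x * y^6 * A * B^14 - 1024 * x * y^7 * B^15 - 2048 * x^2 * A^7 * B^8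 - 2048 * x^2 * y * A^6 * B^9 - 2048 * x^2 * y^2 * A^5 * B^10 - 2048 * x^2 * y^3 * A^4 * B^11 - 2048 * x^2 * y^4 * A^3 * B^12 - 2048 * x^2 * y^5 * A^2 * B^13 - 2048 * x^2 * y^6 * A * B^14 - 2048 * x^2 * y^7 * B^15 - 1792 * x^3 * A^7 * B^8 - 1792 * x^3 * y * A^6 * B^9 - 1792 * x^3 * y^2 * A^5 * B^10 - 1792 * x^3 * y^3 * A^4 * B^11 - 1792 * x^3 * y^4 * A^3 * B^12 - 1792 * x^3 * y^5 * A^2 * B^13 - 1792 * x^3 * y^6 * A * B^14 - 1792 * x^3 * y^7 * B^15 - 1024 * x^4 * A^7 * B^8 - 1024 * x^4 * y * A^6 * B^9 - 1024 * x^4 * y^2 * A^5 * B^10 - 1024 * x^4 * y^3 * A^4 * B^11 - 1024 * x^4 * y^4 * A^3 * B^12 - 1024 * x^4 * y^5 * A^2 * B^13 - 1024 * x^4 * y^6 * A * B^14 - 1024 * x^4 * y^7 * B^15 - 448 * x^5 * A^7 * B^8 - 448 * x^5 * y * A^6 * B^9 - 448 * x^5 * y^2 * A^5 * B^10 - 448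 * x^5 * y^3 * A^4 * B^11 - 448 * x^5 * y^4 * A^3 * B^12 - 448 * x^5 * y^5 * A^2 * B^13 - 448 * x^5 * y^6 * A * B^14 - 448 * x^5 * y^7 * B^15 - 128 * x^6 * A^7 * B^8 - 128 * x^6 * y * A^6 * B^9 - 128 * x^6 * y^2 * A^5 * B^10 - 128 * x^6 * y^3 * A^4 * B^11 - 128 * x^6 * y^4 * A^3 * B^12 - 128 * x^6 * y^5 * A^2 * B^13 - 128 * x^6 * y^6 * A * B^14 - 128 * x^6 * y^7 * B^15 - 16 * x^7 * A^7 * B^8 - 16 * x^7 * y * A^6 * B^9 - 16 * x^7 * y^2 * A^5 * B^10 - 16 * x^7 * y^3 * A^4 * B^11 - 16 * x^7 * y^4 * A^3 * B^12 - 16 * x^7 * y^5 * A^2 * B^13 - 16 * x^7 * y^6 * A * B^14 - 16 * x^7 * y^7 * B^15) * hyB + (- 16384 * B * C^14 + 65536 * B^2 * C^13 - 49152 * B^3 * C^12 - 131072 * B^4 * C^11 + 245760 * B^5 * C^10 - 65536 * B^6 * C^9 - 180224 * B^7 * C^8 + 262144 * B^8 * C^7 - 180224 * B^9 * C^6 -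 65536 * B^10 * C^5 + 245760 * B^11 * C^4 - 131072 * B^12 * C^3 - 49152 * B^13 * C^2 + 65536 * B^14 * C - 16384 * B^15 - 1024 * A^8 * B * C^6 - 4096 * A^8 * B^2 * C^5 - 7168 * A^8 * B^3 * C^4 - 8192 * A^8 * B^4 * C^3 - 7168 * A^8 * B^5 * C^2 - 4096 * A^8 * B^6 * C - 1024 * A^8 * B^7 - 8192 * x * B^2 * C^13 + 32768 * x * B^3 * C^12 - 24576 * x * B^4 * C^11 - 65536 * x * B^5 * C^10 + 122880 * x * B^6 * C^9 - 32768 * x * B^7 * C^8 - 90112 * x * B^8 * C^7 + 131072 * x * B^9 * C^6 - 90112 * x * B^10 * C^5 - 32768 * x * B^11 * C^4 + 122880 * x * B^12 * C^3 - 65536 * x * B^13 * C^2 - 24576 * x * B^14 * C + 32768 * x * B^15 - 512 * x * A^8 * B^2 * C^5 - 2048 * x * A^8 * B^3 * C^4 - 3584 * x * A^8 * B^4 * C^3 - 4096 * x * A^8 * B^5 * C^2 - 3584 * x * A^8 * B^6 * C - 2048 * x * A^8 * B^7 - 4096 * x^2 * B^3 * C^12 + 16384 * x^2 * B^4 * C^11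 - 12288 * x^2 * B^5 * C^10 - 32768 * x^2 * B^6 * C^9 + 61440 * x^2 * B^7 * C^8 - 16384 * x^2 * B^8 * C^7 - 45056 * x^2 * B^9 * C^6 + 65536 * x^2 * B^10 * C^5 - 45056 * x^2 * B^11 * C^4 - 16384 * x^2 * B^12 * C^3 + 61440 * x^2 * B^13 * C^2 - 32768 * x^2 * B^14 * C - 12288 * x^2 * B^15 - 256 * x^2 * A^8 * B^3 * C^4 - 1024 * x^2 * A^8 * B^4 * C^3 - 1792 * x^2 * A^8 * B^5 * C^2 - 2048 * x^2 * A^8 * B^6 * C - 1792 * x^2 * A^8 * B^7 - 2048 * x^3 * B^4 * C^11 + 8192 * x^3 * B^5 * C^10 - 6144 * x^3 * B^6 * C^9 - 16384 * x^3 * B^7 * C^8 + 30720 * x^3 * B^8 * C^7 - 8192 * x^3 * B^9 * C^6 - 22528 * x^3 * B^10 * C^5 + 32768 * x^3 * B^11 * C^4 - 22528 * x^3 * B^12 * C^3 - 8192 * x^3 * B^13 * C^2 + 30720 * x^3 * B^14 * C - 16384 * x^3 * B^15 - 128 * x^3 * A^8 * B^4 * C^3 - 512 * x^3 * A^8 *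 B^5 * C^2 - 896 * x^3 * A^8 * B^6 * C - 1024 * x^3 * A^8 * B^7 - 1024 * x^4 * B^5 * C^10 + 4096 * x^4 * B^6 * C^9 - 3072 * x^4 * B^7 * C^8 - 8192 * x^4 * B^8 * C^7 + 15360 * x^4 * B^9 * C^6 - 4096 * x^4 * B^10 * C^5 - 11264 * x^4 * B^11 * C^4 + 16384 * x^4 * B^12 * C^3 - 11264 * x^4 * B^13 * C^2 - 4096 * x^4 * B^14 * C + 15360 * x^4 * B^15 - 64 * x^4 * A^8 * B^5 * C^2 - 256 * x^4 * A^8 * B^6 * C - 448 * x^4 * A^8 * B^7 - 512 * x^5 * B^6 * C^9 + 2048 * x^5 * B^7 * C^8 - 1536 * x^5 * B^8 * C^7 - 4096 * x^5 * B^9 * C^6 + 7680 * x^5 * B^10 * C^5 - 2048 * x^5 * B^11 * C^4 - 5632 * x^5 * B^12 * C^3 + 8192 * x^5 * B^13 * C^2 - 5632 * x^5 * B^14 * C - 2048 * x^5 * B^15 - 32 * x^5 * A^8 * B^6 * C - 128 * x^5 * A^8 * B^7 - 256 * x^6 * B^7 * C^8 + 1024 * x^6 * B^8 * C^7 - 768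 * x^6 * B^9 * C^6 - 2048 * x^6 * B^10 * C^5 + 3840 * x^6 * B^11 * C^4 - 1024 * x^6 * B^12 * C^3 - 2816 * x^6 * B^13 * C^2 + 4096 * x^6 * B^14 * C - 2816 * x^6 * B^15 - 16 * x^6 * A^8 * B^7 - 128 * x^7 * B^8 * C^7 + 512 * x^7 * B^9 * C^6 - 384 * x^7 * B^10 * C^5 - 1024 * x^7 * B^11 * C^4 + 1920 * x^7 * B^12 * C^3 - 512 * x^7 * B^13 * C^2 - 1408 * x^7 * B^14 * C + 2048 * x^7 * B^15 - 64 * x^8 * B^9 * C^6 + 256 * x^8 * B^10 * C^5 - 192 * x^8 * B^11 * C^4 - 512 * x^8 * B^12 * C^3 + 960 * x^8 * B^13 * C^2 - 256 * x^8 * B^14 * C - 704 * x^8 * B^15 - 32 * x^9 * B^10 * C^5 + 128 * x^9 * B^11 * C^4 - 96 * x^9 * B^12 * C^3 - 256 * x^9 * B^13 * C^2 + 480 * x^9 * B^14 * C - 128 * x^9 * B^15 - 16 * x^10 * B^11 * C^4 + 64 * x^10 * B^12 * C^3 - 48 * x^10 * B^13 * C^2 - 128 * x^10 * B^14 * C +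 240 * x^10 * B^15 - 8 * x^11 * B^12 * C^3 + 32 * x^11 * B^13 * C^2 - 24 * x^11 * B^14 * C - 64 * x^11 * B^15 - 4 * x^12 * B^13 * C^2 + 16 * x^12 * B^14 * C - 12 * x^12 * B^15 - 2 * x^13 * B^14 * C + 8 * x^13 * B^15 - x^14 * B^15) * hxB
    rcases mul_eq_zero.mp main with h | h
    · exact absurd h (pow_ne_zero 16 hBz)
    · exact h
end

section
/- The polynomial P₈(x,y) = y¹⁶ − 16·x·(x+2)⁴·(x²+4)·y⁸ − x·(x+2)⁴·(x−2)⁸·(x²+4) is irreducible in the polynomial ring ℚ[x,y]. -/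
noncomputable def e1 : MvPolynomial (Fin 1) ℚ ≃ₐ[ℚ] Polynomial ℚ :=
  (MvPolynomial.finSuccEquiv ℚ 0).trans
    (Polynomial.mapAlgEquiv (MvPolynomial.isEmptyAlgEquiv ℚ (Fin 0)))

noncomputable def e2 : MvPolynomial (Fin 2) ℚ ≃ₐ[ℚ] Polynomial (Polynomial ℚ) :=
  ((MvPolynomial.renameEquiv ℚ (Equiv.swap 0 1)).trans
    (MvPolynomial.finSuccEquiv ℚ 1)).trans (Polynomial.mapAlgEquiv e1)

theorem e2_X1 : e2 (MvPolynomial.X 1) = Polynomial.X := by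
  simp [e2, e1, Equiv.swap_apply_right, MvPolynomial.finSuccEquiv_X_zero]

theorem e2_X0 : e2 (MvPolynomial.X 0) = Polynomial.C Polynomial.X := by
  have h : MvPolynomial.X (R := ℚ) (1 : Fin 2) = MvPolynomial.X (Fin.succ 0) := rfl
  simp only [e2, e1, AlgEquiv.trans_apply, MvPolynomial.renameEquiv_apply,
    MvPolynomial.rename_X, Equiv.swap_apply_left, h, MvPolynomial.finSuccEquiv_X_succ]
  rw [Polynomial.mapAlgEquiv]
  simp [MvPolynomial.finSuccEquiv_X_zero]

noncomputable def aP : Polynomial ℚ :=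
  16 * Polynomial.X * (Polynomial.X + 2) ^ 4 * (Polynomial.X ^ 2 + 4)

noncomputable def bP : Polynomial ℚ :=
  Polynomial.X * (Polynomial.X + 2) ^ 4 * (Polynomial.X - 2) ^ 8 * (Polynomial.X ^ 2 + 4)

theorem e2_P : e2 ((MvPolynomial.X 1) ^ 16
      - 16 * MvPolynomial.X 0 * (MvPolynomial.X 0 + 2) ^ 4
          * ((MvPolynomial.X 0) ^ 2 + 4) * (MvPolynomial.X 1) ^ 8
      - MvPolynomial.X 0 * (MvPolynomial.X 0 + 2) ^ 4 * (MvPolynomial.X 0 - 2) ^ 8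
          * ((MvPolynomial.X 0) ^ 2 + 4) : MvPolynomial (Fin 2) ℚ)
    = Polynomial.X ^ 16 - Polynomial.C aP * Polynomial.X ^ 8 - Polynomial.C bP := by
  simp only [map_sub, map_add, map_mul, map_pow, map_ofNat, e2_X0, e2_X1, aP, bP,
    Polynomial.C_mul, Polynomial.C_add, Polynomial.C_sub, Polynomial.C_pow]

open Polynomial in
theorem fIrr : Irreducible (X ^ 16 - C aP * X ^ 8 - C bP : Polynomial (Polynomial ℚ)) := by
  have hmon : (X ^ 16 - C aP * X ^ 8 - C bP : Polynomial (Polynomial ℚ)).Monic := by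
    monicity!
  have hdeg : (X ^ 16 - C aP * X ^ 8 - C bP : Polynomial (Polynomial ℚ)).degree = 16 := by
    compute_degree!
  have hXdvd_a : (X : Polynomial ℚ) ∣ aP := ⟨16 * (X + 2) ^ 4 * (X ^ 2 + 4), by rw [aP]; ring⟩
  have hXdvd_b : (X : Polynomial ℚ) ∣ bP :=
    ⟨(X + 2) ^ 4 * (X - 2) ^ 8 * (X ^ 2 + 4), by rw [bP]; ring⟩
  have hP : (Ideal.span {(X : Polynomial ℚ)}).IsPrime :=
    (Ideal.span_singleton_prime Polynomial.X_ne_zero).mpr Polynomial.prime_X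
  refine Polynomial.irreducible_of_eisenstein_criterion hP ?_ ?_ ?_ ?_ ?_
  · rw [hmon.leadingCoeff]
    intro h
    exact hP.ne_top (Ideal.eq_top_iff_one _ |>.mpr h)
  · intro n hn
    rw [hdeg] at hn
    have hn' : n < 16 := by exact_mod_cast hn
    rw [Ideal.mem_span_singleton]
    interval_cases n <;>
      simp [coeff_X_pow, Polynomial.coeff_C, Polynomial.coeff_C_mul, hXdvd_a, hXdvd_b,
        dvd_neg]
  · rw [hdeg]; norm_num
  · rw [Ideal.span_singleton_pow, Ideal.mem_span_singleton]
    have hc0 : (X ^ 16 - C aP * X ^ 8 - C bP : Polynomial (Polynomial ℚ)).coeff 0 = -bP := by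
      simp [coeff_X_pow, Polynomial.coeff_C_mul]
    rw [hc0, dvd_neg]
    intro hdvd
    have : (X : Polynomial ℚ) ∣ (X + 2) ^ 4 * (X - 2) ^ 8 * (X * X + 4) := by
      have hb : bP = X * ((X + 2) ^ 4 * (X - 2) ^ 8 * (X * X + 4)) := by rw [bP]; ring
      rw [hb, pow_two] at hdvd
      exact (mul_dvd_mul_iff_left (Polynomial.X_ne_zero (R := ℚ))).mp hdvd
    rw [Polynomial.X_dvd_iff, Polynomial.coeff_zero_eq_eval_zero] at this
    norm_num at this
  · exact hmon.isPrimitive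

theorem P8_irreducible :
    Irreducible ((MvPolynomial.X 1) ^ 16
      - 16 * MvPolynomial.X 0 * (MvPolynomial.X 0 + 2) ^ 4
          * ((MvPolynomial.X 0) ^ 2 + 4) * (MvPolynomial.X 1) ^ 8
      - MvPolynomial.X 0 * (MvPolynomial.X 0 + 2) ^ 4 * (MvPolynomial.X 0 - 2) ^ 8
          * ((MvPolynomial.X 0) ^ 2 + 4) : MvPolynomial (Fin 2) ℚ) := by
  rw [← MulEquiv.irreducible_iff e2, e2_P]
  exact fIrr
end
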